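/- arXiv:2605.25495 — 2 statements merged into one kernel-verified Lean document; each statement's English description precedes it below -/
import Mathlib

section
/- Let M be a real d×d matrix with ‖M‖_F² ≥ D and largest singular value σ_1(M) ≤ S (with S > 0). If Δ is a real d×d matrix with rank(Δ) ≤ r and ‖M − Δ‖_F ≤ ε, then r ≥ (D − ε²)/S². In particular, a larger required misalignment D forces a proportionally larger rank r for any ε-accurate low-rank approximation. -/
open scoped BigOperators

/-- Frobenius norm of a real matrix. -/
noncomputable def frobNorm {m n : ℕ} (M : Matrix (Fin m) (Fin n) ℝ) : ℝ :=
  Real.sqrt (∑ i, ∑ j, (M i j) ^ 2)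

/-- Singular values of a real `d × d` matrix, listed in decreasing order:
the square roots of the eigenvalues of `Mᵀ * M`, sorted decreasingly
(index `0` is the largest singular value `σ₁`). -/
noncomputable def singularValues {d : ℕ} (M : Matrix (Fin d) (Fin d) ℝ) : Fin d → ℝ :=
  fun i =>
    Real.sqrt
      (((Matrix.isHermitian_conjTranspose_mul_self M).eigenvalues ∘
          Tuple.sort ((Matrix.isHermitian_conjTranspose_mul_self M).eigenvalues)) i.rev)

/-- Condition number of a Hermitian (e.g. positive definite) real matrix:
ratio of its largest to its smallest eigenvalue. -/
noncomputable def condNumber {d : ℕ} (A : Matrix (Fin d) (Fin d) ℝ)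
    (hA : A.IsHermitian) : ℝ :=
  (⨆ i, hA.eigenvalues i) / (⨅ i, hA.eigenvalues i)

/-!
Let `W` be the column space of `Δ`, of dimension at most `r`, and `P` the orthogonal projection
onto `W`. Column by column, `‖M - Δ‖_F² ≥ ‖M - P M‖_F² = ‖M‖_F² - ‖P M‖_F²`, since `P` gives the
best approximation in `W`. For an orthonormal basis `b₁, …, b_s` of `W`,
`‖P M‖_F² = ∑ₖ ‖Mᵀ bₖ‖² ≤ s ‖M‖² ≤ r S²`, where `‖M‖` is the operator norm, i.e. `σ₁(M)`.
-/

open Module WithLp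
open scoped InnerProductSpace Matrix.Norms.L2Operator

theorem Tuple.apply_le_comp_sort_rev {α : Type*} [LinearOrder α] {d : ℕ} (hd : 0 < d)
    (f : Fin d → α) (i : Fin d) : f i ≤ (f ∘ Tuple.sort f) (Fin.rev ⟨0, hd⟩) := by
  rw [← Equiv.apply_symm_apply (Tuple.sort f) i]
  refine Tuple.monotone_sort f ?_
  simp only [Fin.le_def, Fin.val_rev]
  omega

section InnerProductSpace

variable {𝕜 E ι : Type*} [RCLike 𝕜] [NormedAddCommGroup E] [InnerProductSpace 𝕜 E] [Fintype ι]

namespace Submodule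

theorem sum_norm_sq_orthogonalProjectionOnto_le (W : Submodule 𝕜 E) [FiniteDimensional 𝕜 W]
    (v : ι → E) {C : ℝ} (hC : ∀ u, ∑ j, ‖⟪u, v j⟫_𝕜‖ ^ 2 ≤ C * ‖u‖ ^ 2) :
    ∑ j, ‖W.orthogonalProjectionOnto (v j)‖ ^ 2 ≤ finrank 𝕜 W * C := by
  let b := stdOrthonormalBasis 𝕜 W
  calc ∑ j, ‖W.orthogonalProjectionOnto (v j)‖ ^ 2
      = ∑ j, ∑ k, ‖⟪(b k : E), v j⟫_𝕜‖ ^ 2 := by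
        simp_rw [← b.sum_sq_norm_inner_right, inner_orthogonalProjectionOnto_eq_of_mem_left]
    _ = ∑ k, ∑ j, ‖⟪(b k : E), v j⟫_𝕜‖ ^ 2 := Finset.sum_comm
    _ ≤ ∑ _k, C := Finset.sum_le_sum fun k _ => by
        simpa [Submodule.norm_coe, b.orthonormal.1 k] using hC (b k)
    _ = finrank 𝕜 W * C := by simp

theorem norm_sq_le_norm_sq_orthogonalProjectionOnto_add (W : Submodule 𝕜 E)
    [W.HasOrthogonalProjection] (x : E) {w : E} (hw : w ∈ W) :
    ‖x‖ ^ 2 ≤ ‖W.orthogonalProjectionOnto x‖ ^ 2 + ‖x - w‖ ^ 2 := by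
  rw [norm_sq_eq_add_norm_sq_projection x W, orthogonalProjectionOnto_orthogonal]
  gcongr
  change ‖x - W.starProjection x‖ ≤ ‖x - w‖
  rw [starProjection_minimal]
  exact ciInf_le ⟨0, by rintro _ ⟨y, rfl⟩; positivity⟩ (⟨w, hw⟩ : W)

end Submodule

theorem sum_norm_sq_le_finrank_span_mul_add_sum_norm_sub_sq (v w : ι → E) {C : ℝ}
    (hC : ∀ u, ∑ j, ‖⟪u, v j⟫_𝕜‖ ^ 2 ≤ C * ‖u‖ ^ 2) :
    ∑ j, ‖v j‖ ^ 2 ≤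
      finrank 𝕜 (Submodule.span 𝕜 (Set.range w)) * C + ∑ j, ‖v j - w j‖ ^ 2 := by
  set W := Submodule.span 𝕜 (Set.range w)
  have : FiniteDimensional 𝕜 W := FiniteDimensional.span_of_finite 𝕜 (Set.finite_range w)
  calc ∑ j, ‖v j‖ ^ 2
      ≤ ∑ j, (‖W.orthogonalProjectionOnto (v j)‖ ^ 2 + ‖v j - w j‖ ^ 2) :=
        Finset.sum_le_sum fun j _ =>
          W.norm_sq_le_norm_sq_orthogonalProjectionOnto_add (v j) (Submodule.subset_span ⟨j, rfl⟩)
    _ ≤ finrank 𝕜 W * C + ∑ j, ‖v j - w j‖ ^ 2 := by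
        rw [Finset.sum_add_distrib]
        gcongr
        exact W.sum_norm_sq_orthogonalProjectionOnto_le v hC

end InnerProductSpace

namespace Matrix

variable {𝕜 m n : Type*} [RCLike 𝕜] [Fintype n]

theorem finrank_span_range_toLp_col (A : Matrix m n 𝕜) :
    finrank 𝕜 (Submodule.span 𝕜 (Set.range fun j => toLp 2 (A.col j))) = A.rank := by
  rw [rank_eq_finrank_span_cols, ← (WithLp.linearEquiv 2 𝕜 (m → 𝕜)).symm.finrank_map_eq,
    Submodule.map_span, ← Set.range_comp]
  rfl

variable [Fintype m] [DecidableEq m] [DecidableEq n]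

theorem sum_norm_sq_inner_toLp_col_le (A : Matrix m n 𝕜) (u : EuclideanSpace 𝕜 m) :
    ∑ j, ‖⟪u, toLp 2 (A.col j)⟫_𝕜‖ ^ 2 ≤ ‖A‖ ^ 2 * ‖u‖ ^ 2 := by
  have hinner : ∀ j, ‖⟪u, toLp 2 (A.col j)⟫_𝕜‖ = ‖(Aᴴ *ᵥ ofLp u) j‖ := by
    intro j
    rw [← RCLike.norm_conj]
    simp [PiLp.inner_apply, mulVec, dotProduct, col, mul_comm]
  calc ∑ j, ‖⟪u, toLp 2 (A.col j)⟫_𝕜‖ ^ 2 = ‖toLp 2 (Aᴴ *ᵥ ofLp u)‖ ^ 2 := by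
        simp_rw [EuclideanSpace.norm_sq_eq, hinner]
    _ ≤ (‖Aᴴ‖ * ‖u‖) ^ 2 := by gcongr; exact l2_opNorm_mulVec Aᴴ u
    _ = ‖A‖ ^ 2 * ‖u‖ ^ 2 := by rw [l2_opNorm_conjTranspose, mul_pow]

theorem IsHermitian.l2_opNorm_eq_norm_eigenvalues {A : Matrix n n 𝕜} (hA : A.IsHermitian) :
    ‖A‖ = ‖hA.eigenvalues‖ := by
  conv_lhs => rw [hA.spectral_theorem, Unitary.conjStarAlgAut_apply, ← Unitary.coe_star,
    CStarRing.norm_mul_coe_unitary, CStarRing.norm_coe_unitary_mul, l2_opNorm_diagonal]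
  simp [Pi.norm_def]

end Matrix

theorem l2_opNorm_le_singularValues_zero {d : ℕ} (hd : 0 < d) (M : Matrix (Fin d) (Fin d) ℝ) :
    ‖M‖ ≤ singularValues M ⟨0, hd⟩ := by
  have hMM := Matrix.isHermitian_conjTranspose_mul_self M
  have hnonneg := M.eigenvalues_conjTranspose_mul_self_nonneg
  rw [singularValues, Function.comp_apply, Real.le_sqrt (norm_nonneg _) (hnonneg _), sq,
    ← Matrix.l2_opNorm_conjTranspose_mul_self, hMM.l2_opNorm_eq_norm_eigenvalues,
    pi_norm_le_iff_of_nonneg (hnonneg _)]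
  intro i
  rw [Real.norm_of_nonneg (hnonneg i)]
  exact Tuple.apply_le_comp_sort_rev hd _ i

theorem frobNorm_sq_eq_sum_norm_sq_toLp_col {m n : ℕ} (A : Matrix (Fin m) (Fin n) ℝ) :
    frobNorm A ^ 2 = ∑ j, ‖toLp 2 (A.col j)‖ ^ 2 := by
  rw [frobNorm, Real.sq_sqrt (by positivity), Finset.sum_comm]
  simp [EuclideanSpace.norm_sq_eq, Matrix.col]

/-- If ‖M‖_F² ≥ D and the largest singular value of M is at most
S > 0, then any rank-≤r matrix Δ with ‖M − Δ‖_F ≤ ε satisfies r ≥ (D − ε²)/S². -/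
theorem rank_lower_bound_of_misalignment
    {d : ℕ} (hd : 0 < d) (M : Matrix (Fin d) (Fin d) ℝ)
    (D S : ℝ) (hS : 0 < S)
    (hD : D ≤ frobNorm M ^ 2)
    (hσ : singularValues M ⟨0, hd⟩ ≤ S)
    (r : ℕ) (ε : ℝ) (Δ : Matrix (Fin d) (Fin d) ℝ)
    (hΔ : Δ.rank ≤ r) (herr : frobNorm (M - Δ) ≤ ε) :
    (D - ε ^ 2) / S ^ 2 ≤ (r : ℝ) := by
  have hM : ‖M‖ ≤ S := (l2_opNorm_le_singularValues_zero hd M).trans hσ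
  have hfrob := sum_norm_sq_le_finrank_span_mul_add_sum_norm_sub_sq
    (fun j => toLp 2 (M.col j)) (fun j => toLp 2 (Δ.col j)) M.sum_norm_sq_inner_toLp_col_le
  have hcol_sub : ∀ j, toLp 2 (M.col j) - toLp 2 (Δ.col j) = toLp 2 ((M - Δ).col j) :=
    fun j => rfl
  simp only [hcol_sub, ← frobNorm_sq_eq_sum_norm_sq_toLp_col, Δ.finrank_span_range_toLp_col]
    at hfrob
  have herr_sq : frobNorm (M - Δ) ^ 2 ≤ ε ^ 2 := pow_le_pow_left₀ (Real.sqrt_nonneg _) herr 2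
  have hrank : (Δ.rank : ℝ) * ‖M‖ ^ 2 ≤ r * S ^ 2 := by gcongr
  rw [div_le_iff₀ (by positivity)]
  linarith
end

section
/- Let X, Y ∈ ℝ^{d×n} be nonzero matrices with XXᵀ and YYᵀ positive definite, let ρ = ‖XYᵀ‖_F² / (‖XXᵀ‖_F · ‖YYᵀ‖_F) be their linear CKA, let κ(XXᵀ), κ(YYᵀ) be the condition numbers of the feature covariances, let W* = Y Xᵀ (X Xᵀ)⁻¹ be the optimal linear aligner, and assume the largest singular value of W* − I is at most S > 0 and that ‖W* − I‖_F² ≥ d·(1 − ρ)/(κ(XXᵀ)·κ(YYᵀ)). Then for every ε > 0, any matrix Δ with rank(Δ) ≤ r and ‖(W* − I) − Δ‖_F ≤ ε satisfies r ≥ (d·(1 − ρ)/(κ(XXᵀ)·κ(YYᵀ)) − ε²)/S². Hence layers whose representations have lower CKA similarity ρ with the source domain require a higher rank r to achieve a given approximation fidelity ε. -/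
open scoped BigOperators
open Matrix

/-!
Write `E = W* − I`. The bound `σ₁(E) ≤ S` says `EᵀE ≤ S² • 1` in the Loewner order. Given `Δ`,
let `Q` be the orthogonal projection onto the row space of `Δ`, so that `Δ Q = Δ` and
`tr Q = rank Δ`. Then `‖E‖_F² = tr (EᵀE Q) + tr (EᵀE (1 − Q))`; the first term is at most
`S² tr Q = S² rank Δ`, and the second is `‖E (1 − Q)‖_F² = ‖(E − Δ)(1 − Q)‖_F² ≤ ‖E − Δ‖_F²`.
Hence `‖E‖_F² ≤ S² r + ε²`, which together with the lower bound on `‖E‖_F²` gives the claim.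
-/

open scoped MatrixOrder

namespace Matrix

variable {m n : Type*} [Fintype m] [Fintype n]

theorem IsHermitian.le_smul_one_of_eigenvalues_le [DecidableEq n] {A : Matrix n n ℝ}
    (hA : A.IsHermitian) {c : ℝ} (h : ∀ i, hA.eigenvalues i ≤ c) : A ≤ c • 1 := by
  rw [← Algebra.algebraMap_eq_smul_one]
  refine le_algebraMap_of_spectrum_le (fun x hx => ?_) hA
  obtain ⟨i, rfl⟩ := hA.spectrum_real_eq_range_eigenvalues ▸ hx
  exact h i

theorem trace_mul_isStarProjection {P : Matrix n n ℝ} (hP : IsStarProjection P)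
    (A : Matrix n n ℝ) : (A * P).trace = (Pᵀ * A * P).trace := by
  rw [← conjTranspose_eq_transpose_of_trivial, ← star_eq_conjTranspose, hP.isSelfAdjoint.star_eq,
    trace_mul_comm (P * A), ← Matrix.mul_assoc, hP.isIdempotentElem.eq, trace_mul_comm]

theorem trace_transpose_mul_self_mul_isStarProjection {P : Matrix n n ℝ}
    (hP : IsStarProjection P) (M : Matrix m n ℝ) :
    (Mᵀ * M * P).trace = ((M * P)ᵀ * (M * P)).trace := by
  rw [trace_mul_isStarProjection hP, transpose_mul, Matrix.mul_assoc, Matrix.mul_assoc,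
    Matrix.mul_assoc]

theorem trace_transpose_mul_self_mul_le [DecidableEq n] {E : Matrix m n ℝ} {c : ℝ}
    (hE : Eᵀ * E ≤ c • 1) {Q : Matrix n n ℝ} (hQ : IsStarProjection Q) :
    (Eᵀ * E * Q).trace ≤ c * Q.trace := by
  have h := OrderHomClass.mono (tracePositiveLinearMap n ℝ ℝ)
    (star_left_conjugate_le_conjugate hE Q)
  rwa [tracePositiveLinearMap_apply, tracePositiveLinearMap_apply, star_eq_conjTranspose,
    conjTranspose_eq_transpose_of_trivial, ← trace_mul_isStarProjection hQ,
    ← trace_mul_isStarProjection hQ, Matrix.smul_mul, Matrix.one_mul, trace_smul,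
    smul_eq_mul] at h

theorem trace_transpose_mul_self_mul_one_sub_le [DecidableEq n] (E Δ : Matrix m n ℝ)
    {Q : Matrix n n ℝ} (hQ : IsStarProjection Q) (hΔ : Δ * Q = Δ) :
    (Eᵀ * E * (1 - Q)).trace ≤ ((E - Δ)ᵀ * (E - Δ)).trace := by
  have hres : E * (1 - Q) = (E - Δ) * (1 - Q) := by
    rw [Matrix.sub_mul E Δ, Matrix.mul_sub Δ, hΔ, Matrix.mul_one, sub_self, sub_zero]
  calc (Eᵀ * E * (1 - Q)).trace
      = ((E - Δ)ᵀ * (E - Δ) * (1 - Q)).trace := by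
        rw [trace_transpose_mul_self_mul_isStarProjection hQ.one_sub, hres,
          ← trace_transpose_mul_self_mul_isStarProjection hQ.one_sub]
    _ = ((E - Δ)ᵀ * (E - Δ)).trace - (((E - Δ) * Q)ᵀ * ((E - Δ) * Q)).trace := by
        rw [Matrix.mul_sub, Matrix.mul_one, trace_sub,
          trace_transpose_mul_self_mul_isStarProjection hQ]
    _ ≤ ((E - Δ)ᵀ * (E - Δ)).trace :=
        sub_le_self _ (posSemidef_conjTranspose_mul_self _).trace_nonneg

theorem exists_isStarProjection_mul_eq_self_trace_eq_rank (Δ : Matrix m n ℝ) :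
    ∃ Q : Matrix n n ℝ, IsStarProjection Q ∧ Δ * Q = Δ ∧ Q.trace = Δ.rank := by
  classical
  set K := LinearMap.range (toEuclideanLin Δᵀ)
  set Q : Matrix n n ℝ := (toEuclideanCLM (n := n) (𝕜 := ℝ)).symm K.starProjection
  have hQK : toEuclideanCLM (n := n) (𝕜 := ℝ) Q = K.starProjection :=
    StarAlgEquiv.apply_symm_apply _ _
  have hQ : IsStarProjection Q :=
    isStarProjection_starProjection.map ((toEuclideanCLM (n := n) (𝕜 := ℝ)).symm.toStarAlgHom)
  have hQt : Qᵀ = Q := by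
    rw [← conjTranspose_eq_transpose_of_trivial, ← star_eq_conjTranspose, hQ.isSelfAdjoint.star_eq]
  have hQΔ : Q * Δᵀ = Δᵀ := by
    refine ext_iff_mulVec.mpr fun v => ?_
    have hmem : WithLp.toLp 2 (Δᵀ *ᵥ v) ∈ K := ⟨WithLp.toLp 2 v, rfl⟩
    have hfix := K.starProjection_eq_self_iff.mpr hmem
    rw [← hQK, toEuclideanCLM_toLp] at hfix
    rw [← mulVec_mulVec]
    exact WithLp.toLp_injective 2 hfix
  have hproj : LinearMap.IsProj K (K.starProjection : _ →ₗ[ℝ] _) :=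
    ⟨fun x => K.starProjection_apply_mem x, fun x hx => K.starProjection_eq_self_iff.mpr hx⟩
  refine ⟨Q, hQ, ?_, ?_⟩
  · rw [← transpose_transpose (Δ * Q), transpose_mul, hQt, hQΔ, transpose_transpose]
  · set b := (EuclideanSpace.basisFun n ℝ).toBasis
    have hrank : Δᵀ.rank = Module.finrank ℝ K := by
      rw [rank_eq_finrank_range_toLin Δᵀ b (EuclideanSpace.basisFun m ℝ).toBasis]
      rfl
    rw [← LinearMap.toMatrix_toLin b b Q, ← LinearMap.trace_eq_matrix_trace,
      ← toEuclideanLin_eq_toLin_orthonormal, ← coe_toEuclideanCLM_eq_toEuclideanLin, hQK,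
      hproj.trace, ← hrank, rank_transpose]

theorem trace_transpose_mul_self_le_mul_rank_add [DecidableEq n] {E : Matrix m n ℝ} {c : ℝ}
    (hE : Eᵀ * E ≤ c • 1) (Δ : Matrix m n ℝ) :
    (Eᵀ * E).trace ≤ c * Δ.rank + ((E - Δ)ᵀ * (E - Δ)).trace := by
  obtain ⟨Q, hQ, hΔQ, htrace⟩ := exists_isStarProjection_mul_eq_self_trace_eq_rank Δ
  have hsplit : (Eᵀ * E).trace = (Eᵀ * E * Q).trace + (Eᵀ * E * (1 - Q)).trace := by
    rw [← trace_add, ← Matrix.mul_add, add_sub_cancel, Matrix.mul_one]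
  rw [hsplit, ← htrace]
  exact add_le_add (trace_transpose_mul_self_mul_le hE hQ)
    (trace_transpose_mul_self_mul_one_sub_le E Δ hQ hΔQ)

end Matrix

theorem frobNorm_sq {m n : ℕ} (M : Matrix (Fin m) (Fin n) ℝ) :
    frobNorm M ^ 2 = (Mᵀ * M).trace := by
  rw [frobNorm, Real.sq_sqrt (by positivity), Finset.sum_comm]
  simp [trace, mul_apply, sq]

theorem eigenvalues_le_singularValues_sq {d : ℕ} (hd : 0 < d) (M : Matrix (Fin d) (Fin d) ℝ)
    (i : Fin d) :
    (isHermitian_conjTranspose_mul_self M).eigenvalues i ≤ singularValues M ⟨0, hd⟩ ^ 2 := by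
  set f := (isHermitian_conjTranspose_mul_self M).eigenvalues
  have hlast : ∀ k : Fin d, k ≤ Fin.rev ⟨0, hd⟩ := fun k => by
    simp only [Fin.le_def, Fin.val_rev]
    omega
  have hnonneg : 0 ≤ (f ∘ Tuple.sort f) (Fin.rev ⟨0, hd⟩) :=
    (posSemidef_conjTranspose_mul_self M).eigenvalues_nonneg _
  rw [singularValues, Real.sq_sqrt hnonneg]
  calc f i = (f ∘ Tuple.sort f) ((Tuple.sort f).symm i) := by simp
    _ ≤ (f ∘ Tuple.sort f) (Fin.rev ⟨0, hd⟩) := Tuple.monotone_sort f (hlast _)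

theorem transpose_mul_self_le_singularValues_sq {d : ℕ} (hd : 0 < d)
    (M : Matrix (Fin d) (Fin d) ℝ) : Mᵀ * M ≤ singularValues M ⟨0, hd⟩ ^ 2 • 1 :=
  (isHermitian_conjTranspose_mul_self M).le_smul_one_of_eigenvalues_le
    (eigenvalues_le_singularValues_sq hd M)

theorem frobNorm_sq_le_singularValues_sq_mul_rank_add {d : ℕ} (hd : 0 < d)
    (E Δ : Matrix (Fin d) (Fin d) ℝ) :
    frobNorm E ^ 2 ≤ singularValues E ⟨0, hd⟩ ^ 2 * Δ.rank + frobNorm (E - Δ) ^ 2 := by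
  simpa only [frobNorm_sq] using
    trace_transpose_mul_self_le_mul_rank_add (transpose_mul_self_le_singularValues_sq hd E) Δ

theorem cka_rank_lower_bound_general
    {d n : ℕ} (hd : 0 < d) (X Y : Matrix (Fin d) (Fin n) ℝ)
    (hXX : (X * Xᵀ).PosDef) (hYY : (Y * Yᵀ).PosDef)
    (S : ℝ)
    (hσ : singularValues (Y * Xᵀ * (X * Xᵀ)⁻¹ - 1) ⟨0, hd⟩ ≤ S)
    (hlow :
      (d : ℝ) *
          (1 - frobNorm (X * Yᵀ) ^ 2 / (frobNorm (X * Xᵀ) * frobNorm (Y * Yᵀ))) /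
          (condNumber (X * Xᵀ) hXX.1 * condNumber (Y * Yᵀ) hYY.1) ≤
        frobNorm (Y * Xᵀ * (X * Xᵀ)⁻¹ - 1) ^ 2) :
    ∀ ε > (0 : ℝ), ∀ (Δ : Matrix (Fin d) (Fin d) ℝ) (r : ℕ),
      Δ.rank ≤ r → frobNorm (Y * Xᵀ * (X * Xᵀ)⁻¹ - 1 - Δ) ≤ ε →
      ((d : ℝ) *
            (1 - frobNorm (X * Yᵀ) ^ 2 / (frobNorm (X * Xᵀ) * frobNorm (Y * Yᵀ))) /
            (condNumber (X * Xᵀ) hXX.1 * condNumber (Y * Yᵀ) hYY.1) -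
          ε ^ 2) / S ^ 2 ≤ (r : ℝ) := by
  intro ε _ Δ r hrank hfit
  set E := Y * Xᵀ * (X * Xᵀ)⁻¹ - 1
  have hrank' : (Δ.rank : ℝ) ≤ r := by exact_mod_cast hrank
  have hE : frobNorm E ^ 2 ≤ S ^ 2 * r + ε ^ 2 :=
    calc frobNorm E ^ 2
        ≤ singularValues E ⟨0, hd⟩ ^ 2 * Δ.rank + frobNorm (E - Δ) ^ 2 :=
          frobNorm_sq_le_singularValues_sq_mul_rank_add hd E Δ
      _ ≤ S ^ 2 * r + ε ^ 2 := by
          have hσ_nonneg : 0 ≤ singularValues E ⟨0, hd⟩ := Real.sqrt_nonneg _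
          have hfit_nonneg : 0 ≤ frobNorm (E - Δ) := Real.sqrt_nonneg _
          gcongr
  exact div_le_of_le_mul₀ (sq_nonneg S) r.cast_nonneg (by linarith)

/-- Lower CKA similarity ρ forces a higher rank: if the optimal
linear aligner W* = Y Xᵀ (X Xᵀ)⁻¹ satisfies σ₁(W* − I) ≤ S and
‖W* − I‖_F² ≥ d·(1 − ρ)/(κ(XXᵀ)·κ(YYᵀ)), then any Δ with rank(Δ) ≤ r and
‖(W* − I) − Δ‖_F ≤ ε has r ≥ (d·(1 − ρ)/(κ(XXᵀ)·κ(YYᵀ)) − ε²)/S². -/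
theorem cka_rank_lower_bound
    {d n : ℕ} (hd : 0 < d) (X Y : Matrix (Fin d) (Fin n) ℝ)
    (hX : X ≠ 0) (hY : Y ≠ 0)
    (hXX : (X * Xᵀ).PosDef) (hYY : (Y * Yᵀ).PosDef)
    (S : ℝ) (hS : 0 < S)
    (hσ : singularValues (Y * Xᵀ * (X * Xᵀ)⁻¹ - 1) ⟨0, hd⟩ ≤ S)
    (hlow :
      (d : ℝ) *
          (1 - frobNorm (X * Yᵀ) ^ 2 / (frobNorm (X * Xᵀ) * frobNorm (Y * Yᵀ))) /
          (condNumber (X * Xᵀ) hXX.1 * condNumber (Y * Yᵀ) hYY.1) ≤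
        frobNorm (Y * Xᵀ * (X * Xᵀ)⁻¹ - 1) ^ 2) :
    ∀ ε > (0 : ℝ), ∀ (Δ : Matrix (Fin d) (Fin d) ℝ) (r : ℕ),
      Δ.rank ≤ r → frobNorm (Y * Xᵀ * (X * Xᵀ)⁻¹ - 1 - Δ) ≤ ε →
      ((d : ℝ) *
            (1 - frobNorm (X * Yᵀ) ^ 2 / (frobNorm (X * Xᵀ) * frobNorm (Y * Yᵀ))) /
            (condNumber (X * Xᵀ) hXX.1 * condNumber (Y * Yᵀ) hYY.1) -
          ε ^ 2) / S ^ 2 ≤ (r : ℝ) :=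
  cka_rank_lower_bound_general hd X Y hXX hYY S hσ hlow
end
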